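/- Let k be a field of characteristic 2, let V be the vector space k^{2n+1} with basis z, x_1, ..., x_n, y_1, ..., y_n, and let d: Λ^• V → Λ^{•-1} V be the linear map determined on the standard exterior basis by d(w_1 ∧ ... ∧ w_p) = Σ_{i<j} [w_i, w_j] ∧ w_1 ∧ ... ∧ ŵ_i ∧ ... ∧ ŵ_j ∧ ... ∧ w_p, where [x_i, y_i] = [y_i, x_i] = z for 1 ≤ i ≤ n and all other brackets of basis elements are 0. Then d ∘ d = 0, and the dimensions b_i = dim_k ker(d: Λ^i V → Λ^{i-1} V) − dim_k im(d: Λ^{i+1} V → Λ^i V) satisfy the polynomial identity (1 + t^2) · Σ_{i ≥ 0} b_i t^i = (1 + t^3)(1 + t)^{2n} + (t + t^2)(2t)^n. -/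

import Mathlib

open Polynomial

/-- Index of the standard monomial basis of the exterior algebra `Λ^• h_n` of the
`(2n+1)`-dimensional Heisenberg Lie algebra with basis `z, x_1, …, x_n, y_1, …, y_n`:
the monomial `z^ε ∧ x_I ∧ y_J` (with `I`, `J` in increasing order) is encoded as
`(ε, I, J)`. -/
abbrev HeisIdx (n : ℕ) := Bool × Finset (Fin n) × Finset (Fin n)

/-- Homological degree of a basis monomial: `deg (z^ε ∧ x_I ∧ y_J) = ε + |I| + |J|`. -/
def heisDeg {n : ℕ} (p : HeisIdx n) : ℕ :=
  (if p.1 then 1 else 0) + p.2.1.card + p.2.2.card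

/-- `Λ^• h_n` as the `k`-vector space with basis the monomials `z^ε ∧ x_I ∧ y_J`. -/
abbrev HeisCE (k : Type*) [Field k] (n : ℕ) := HeisIdx n → k

variable (k : Type*) [Field k]

/-- Image of a basis monomial under the Chevalley–Eilenberg differential
`d(w_1 ∧ ⋯ ∧ w_p) = Σ_{i<j} (-1)^{i+j} [w_i,w_j] ∧ w_1 ∧ ⋯ ŵ_i ⋯ ŵ_j ⋯ ∧ w_p`
of the Heisenberg Lie algebra, whose only nonzero brackets on basis vectors are
`[x_i, y_i] = -[y_i, x_i] = z`.  Explicitly `d(z ∧ x_I ∧ y_J) = 0` and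
`d(x_I ∧ y_J) = Σ_{t ∈ I∩J} (-1)^{a_t + |I| + b_t} z ∧ x_{I∖t} ∧ y_{J∖t}`, where
`a_t`, `b_t` are the positions (ranks) of `t` in `I` resp. `J`. -/
noncomputable def heisDAux (n : ℕ) (p : HeisIdx n) : HeisCE k n :=
  if p.1 then 0 else
    ∑ t ∈ p.2.1 ∩ p.2.2,
      ((-1 : k) ^ ((p.2.1.filter (· ≤ t)).card + p.2.1.card +
          (p.2.2.filter (· ≤ t)).card)) •
        (Pi.single (true, p.2.1.erase t, p.2.2.erase t) (1 : k) : HeisCE k n)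

/-- The Chevalley–Eilenberg differential of the Heisenberg Lie algebra, as the linear
map determined on the standard exterior basis by `heisDAux`. -/
noncomputable def heisD (n : ℕ) : HeisCE k n →ₗ[k] HeisCE k n :=
  ∑ p : HeisIdx n, (LinearMap.proj p).smulRight (heisDAux k n p)

/-- The degree-`i` part `Λ^i h_n`: the subspace spanned by the monomials of degree `i`. -/
def heisChains (n i : ℕ) : Submodule k (HeisCE k n) where
  carrier := {f | ∀ p : HeisIdx n, heisDeg p ≠ i → f p = 0}
  add_mem' hf hg p hp := by simp [hf p hp, hg p hp]
  zero_mem' p _ := rfl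
  smul_mem' c f hf p hp := by simp [hf p hp]

/-- The `i`-cycles: the kernel of `d : Λ^i h_n → Λ^{i-1} h_n`. -/
noncomputable def heisCycles (n i : ℕ) : Submodule k (HeisCE k n) :=
  LinearMap.ker (heisD k n) ⊓ heisChains k n i

/-- The `i`-boundaries: the image of `d : Λ^{i+1} h_n → Λ^i h_n`. -/
noncomputable def heisBoundaries (n i : ℕ) : Submodule k (HeisCE k n) :=
  Submodule.map (heisD k n) (heisChains k n (i + 1))

/-- The `i`-th Lie algebra homology `H_i(h_n; k)` of the Heisenberg Lie algebra with
trivial coefficients: cycles modulo boundaries in the Chevalley–Eilenberg complex. -/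
noncomputable def HeisHomology (n i : ℕ) :=
  heisCycles k n i ⧸
    Submodule.comap (heisCycles k n i).subtype (heisBoundaries k n i)

noncomputable instance (n i : ℕ) : AddCommGroup (HeisHomology k n i) :=
  inferInstanceAs (AddCommGroup (_ ⧸ _))

noncomputable instance (n i : ℕ) : Module k (HeisHomology k n i) :=
  inferInstanceAs (Module k (_ ⧸ _))

/-- The `i`-th Betti number of the Chevalley–Eilenberg complex, as an integer:
`b_i = dim_k ker(d : Λ^i V → Λ^{i-1} V) − dim_k im(d : Λ^{i+1} V → Λ^i V)`. -/
noncomputable def heisBetti (k : Type*) [Field k] (n i : ℕ) : ℤ :=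
  (Module.finrank k (heisCycles k n i) : ℤ) -
    (Module.finrank k (heisBoundaries k n i) : ℤ)


/-!
In characteristic 2 the differential is `d(x_I y_J) = z · T(x_I y_J)` with
`T(x_I y_J) = ∑_{t ∈ I ∩ J} x_{I∖t} y_{J∖t}`, and `d` kills every monomial containing `z`;
in particular `d ∘ d = 0`. By rank–nullity `b_j = c_j - r_j - r_{j+1}`, where
`c_j = dim Λ^j = #{monomials of degree j}` and `r_j` is the rank of `d` (equivalently of `T`)
on `Λ^j`.

`T` is itself a differential, of degree `-2`. Pivoting on the least `t` with `t ∈ I ↔ t ∈ J`,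
the Koszul homotopy `h(x_I y_J) = x_{I+t} y_{J+t}` (zero when `t ∈ I`) satisfies
`T h + h T = 1 - P`, where `P` projects onto the monomials `z x_I y_J` and `x_I y_{Iᶜ}`
(those without a pivot). Hence `ker T = im T ⊕ im P` degreewise, i.e.
`r_j + r_{j+2} + ρ_j = c_j` with `ρ_j` the number of these monomials in degree `j`.
With `∑ c_j t^j = (1+t)^{2n+1}` and `∑ ρ_j t^j = t(1+t)^{2n} + (2t)^n`, the two relations
give the stated identity for the generating function of the `b_j`.
-/

open Module Submodule Finset

section LinearAlgebra

variable {K V V₂ : Type*} [DivisionRing K] [AddCommGroup V] [Module K V] [FiniteDimensional K V]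
  [AddCommGroup V₂] [Module K V₂]

theorem LinearMap.finrank_ker_inf_add_finrank_map (f : V →ₗ[K] V₂) (U : Submodule K V) :
    finrank K ↥(LinearMap.ker f ⊓ U) + finrank K ↥(U.map f) = finrank K U := by
  rw [← (f.domRestrict U).finrank_range_add_finrank_ker, LinearMap.range_domRestrict,
    LinearMap.ker_domRestrict, (U.equivSubtypeMap _).finrank_eq, Submodule.map_comap_subtype,
    inf_comm, add_comm]

theorem finrank_map_add_finrank_map_add_finrank_map_of_homotopy {T h P : V →ₗ[K] V}
    (hTT : T ∘ₗ T = 0) (hPT : P ∘ₗ T = 0) (hPP : P ∘ₗ P = P)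
    (hhom : T ∘ₗ h + h ∘ₗ T = LinearMap.id - P) {U W : Submodule K V}
    (hTU : U.map T ≤ W) (hhW : W.map h ≤ U) (hPW : W.map P ≤ W) :
    finrank K ↥(U.map T) + finrank K ↥(W.map P) + finrank K ↥(W.map T) = finrank K W := by
  have hom (x : V) : T (h x) + h (T x) = x - P x := by simpa using LinearMap.congr_fun hhom x
  have hTT' (x : V) : T (T x) = 0 := by simpa using LinearMap.congr_fun hTT x
  have hPT' (x : V) : P (T x) = 0 := by simpa using LinearMap.congr_fun hPT x
  have hPP' (x : V) : P (P x) = P x := by simpa using LinearMap.congr_fun hPP x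
  -- `T` commutes with `T h + h T = 1 - P`, so `T P = P T = 0`
  have hTP' (x : V) : T (P x) = 0 := by
    have h1 := congrArg T (hom x)
    have h2 := hom (T x)
    rw [map_add, map_sub, hTT', zero_add] at h1
    rw [hTT', map_zero, add_zero, hPT', sub_zero, h1] at h2
    simpa using h2
  have hker : LinearMap.ker T ⊓ W = U.map T ⊔ W.map P := by
    apply le_antisymm
    · rintro x ⟨hx, hxW⟩
      have hx : x = T (h x) + P x := by
        rw [← sub_eq_iff_eq_add, ← hom x, LinearMap.mem_ker.1 hx, map_zero, add_zero]
      rw [hx]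
      exact add_mem_sup (mem_map_of_mem (hhW (mem_map_of_mem hxW))) (mem_map_of_mem hxW)
    · rw [sup_le_iff]
      constructor
      · rintro _ ⟨y, hy, rfl⟩
        exact ⟨hTT' y, hTU (mem_map_of_mem hy)⟩
      · rintro _ ⟨y, hy, rfl⟩
        exact ⟨hTP' y, hPW (mem_map_of_mem hy)⟩
  have hdisj : U.map T ⊓ W.map P = ⊥ := by
    rw [eq_bot_iff]
    rintro _ ⟨⟨y, -, rfl⟩, ⟨z, -, hz⟩⟩
    rw [mem_bot, ← hz, ← hPP', hz, hPT']
  have := Submodule.finrank_sup_add_finrank_inf_eq (U.map T) (W.map P)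
  rw [← hker, hdisj, finrank_bot, add_zero] at this
  rw [← this, T.finrank_ker_inf_add_finrank_map W]

end LinearAlgebra

section PiSupported

variable (K : Type*) {ι : Type*} [Semiring K]

def piSupported (s : Finset ι) : Submodule K (ι → K) where
  carrier := {f | ∀ i ∉ s, f i = 0}
  add_mem' hf hg i hi := by simp [hf i hi, hg i hi]
  zero_mem' _ _ := rfl
  smul_mem' c f hf i hi := by simp [hf i hi]

def piProj [DecidableEq ι] (s : Finset ι) : (ι → K) →ₗ[K] (ι → K) where
  toFun f i := if i ∈ s then f i else 0
  map_add' f g := by ext i; by_cases hi : i ∈ s <;> simp [hi]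
  map_smul' c f := by ext i; by_cases hi : i ∈ s <;> simp [hi]

variable {K}

theorem mem_piSupported {s : Finset ι} {f : ι → K} : f ∈ piSupported K s ↔ ∀ i ∉ s, f i = 0 :=
  Iff.rfl

theorem piSupported_mono {s t : Finset ι} (h : s ⊆ t) : piSupported K s ≤ piSupported K t :=
  fun _ hf i hi => hf i (fun his => hi (h his))

variable [DecidableEq ι]

theorem single_mem_piSupported {s : Finset ι} {i : ι} (hi : i ∈ s) :
    Pi.single i (1 : K) ∈ piSupported K s := fun j hj => by
  rw [Pi.single_apply, if_neg (ne_of_mem_of_not_mem hi hj).symm]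

theorem map_piSupported_le [Fintype ι] {M : Type*} [AddCommMonoid M] [Module K M]
    {s : Finset ι} {L : (ι → K) →ₗ[K] M} {W : Submodule K M}
    (h : ∀ i ∈ s, L (Pi.single i 1) ∈ W) : (piSupported K s).map L ≤ W := by
  rintro _ ⟨f, hf, rfl⟩
  rw [← Finset.univ_sum_single f, map_sum]
  refine sum_mem fun i _ => ?_
  by_cases hi : i ∈ s
  · rw [← mul_one (f i), ← smul_eq_mul, Pi.single_smul', map_smul]
    exact W.smul_mem (f i) (h i hi)
  · simp [hf i hi]

theorem piProj_apply (s : Finset ι) (f : ι → K) (i : ι) :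
    piProj K s f i = if i ∈ s then f i else 0 := rfl

theorem piProj_single (s : Finset ι) (i : ι) :
    piProj K s (Pi.single i 1) = if i ∈ s then Pi.single i 1 else 0 := by
  ext j
  by_cases hj : j = i <;> by_cases hi : i ∈ s <;> simp [piProj_apply, hj, hi]

theorem piProj_comp_piProj (s : Finset ι) : piProj K s ∘ₗ piProj K s = piProj K s := by
  ext f i
  simp only [LinearMap.comp_apply, piProj_apply]
  split_ifs <;> rfl

theorem map_piProj_piSupported (s t : Finset ι) :
    (piSupported K t).map (piProj K s) = piSupported K (t ∩ s) := by
  apply le_antisymm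
  · rintro _ ⟨f, hf, rfl⟩ i hi
    rw [mem_inter, not_and_or] at hi
    rw [piProj_apply]
    split_ifs with his
    · exact hf i (hi.resolve_right (not_not.2 his))
    · rfl
  · intro f hf
    refine ⟨f, fun i hi => hf i (by simp [hi]), funext fun i => ?_⟩
    rw [piProj_apply]
    split_ifs with his
    · rfl
    · exact (hf i (by simp [his])).symm

end PiSupported

theorem finrank_piSupported {K ι : Type*} [DivisionRing K] [Fintype ι] (s : Finset ι) :
    finrank K (piSupported K s) = #s := by
  classical
  have : piSupported K s = ⨅ i ∈ (↑s : Set ι)ᶜ, LinearMap.ker (LinearMap.proj i) := by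
    ext f
    simp [mem_piSupported]
  rw [this, (LinearMap.iInfKerProjEquiv K (fun _ => K) disjoint_compl_right
    (by simp)).finrank_eq, finrank_fintype_fun_eq_card]
  simp

theorem Finset.sum_sum_erase_eq_zero_of_symm {α M : Type*} [DecidableEq α] [AddCommMonoid M]
    (h2 : ∀ x : M, x + x = 0) (s : Finset α) {f : α → α → M} (hf : ∀ a b, f a b = f b a) :
    ∑ a ∈ s, ∑ b ∈ s.erase a, f a b = 0 := by
  rw [sum_sigma']
  refine sum_involution (fun x _ => ⟨x.2, x.1⟩) (fun x _ => by rw [hf]; exact h2 _)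
    (fun x hx _ h => ?_) (fun x hx => ?_) (fun x _ => rfl)
  · simp only [mem_sigma, mem_erase] at hx
    exact hx.2.1 (congrArg Sigma.fst h)
  · simp only [mem_sigma, mem_erase] at hx ⊢
    exact ⟨hx.2.2, hx.2.1.symm, hx.1⟩

theorem sum_range_card_filter_mul_pow {ι R : Type*} [CommSemiring R] (s : Finset ι) (g : ι → ℕ)
    (x : R) {N : ℕ} (hg : ∀ i ∈ s, g i < N) :
    ∑ j ∈ range N, (#{i ∈ s | g i = j} : R) * x ^ j = ∑ i ∈ s, x ^ g i := by
  rw [← sum_fiberwise_of_maps_to (g := g) (t := range N) (fun i hi => mem_range.2 (hg i hi))]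
  refine sum_congr rfl fun j _ => ?_
  rw [card_eq_sum_ones, Nat.cast_sum, sum_mul]
  exact sum_congr rfl fun i hi => by rw [(mem_filter.1 hi).2]; simp

theorem X_mul_sum_range_succ_add_C (u : ℕ → ℤ) (N : ℕ) :
    X * ∑ j ∈ range N, C (u (j + 1)) * X ^ j + C (u 0) =
      ∑ j ∈ range N, C (u j) * X ^ j + C (u N) * X ^ N := by
  rw [mul_sum, ← sum_range_succ, sum_range_succ' _ N]
  simp only [pow_zero, mul_one, pow_succ]
  congr 1
  exact sum_congr rfl fun j _ => by ring

theorem one_add_X_sq_mul_sum_range_eq {N : ℕ} {b c ρ r : ℕ → ℤ}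
    (hb : ∀ j, b j = c j - r j - r (j + 1)) (hr : ∀ j, r j + r (j + 2) + ρ j = c j)
    (h0 : r 0 = 0) (h1 : r 1 = 0) (hN : r N = 0) (hN1 : r (N + 1) = 0) :
    (1 + X ^ 2) * ∑ j ∈ range N, C (b j) * X ^ j =
      (1 - X) * ∑ j ∈ range N, C (c j) * X ^ j +
        (X + X ^ 2) * ∑ j ∈ range N, C (ρ j) * X ^ j := by
  set G : (ℕ → ℤ) → ℤ[X] := fun u => ∑ j ∈ range N, C (u j) * X ^ j with hG
  have hs1 : X * G (fun j => r (j + 1)) = G r := by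
    have := X_mul_sum_range_succ_add_C r N
    rwa [h0, hN, map_zero, zero_mul, add_zero, add_zero] at this
  have hs2 : X * G (fun j => r (j + 2)) = G (fun j => r (j + 1)) := by
    have := X_mul_sum_range_succ_add_C (fun j => r (j + 1)) N
    rwa [h1, hN1, map_zero, zero_mul, add_zero, add_zero] at this
  have hbG : G b = G c - G r - G (fun j => r (j + 1)) := by
    simp only [hG, hb, map_sub, sub_mul, sum_sub_distrib]
  have hcG : G c = G r + G (fun j => r (j + 2)) + G ρ := by
    simp only [hG, ← hr, map_add, add_mul, sum_add_distrib]
  change (1 + X ^ 2) * G b = (1 - X) * G c + (X + X ^ 2) * G ρ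
  apply mul_left_cancel₀ (X_ne_zero : (X : ℤ[X]) ≠ 0)
  rw [hbG, hcG]
  linear_combination (X - X ^ 2) * hs1 + (X + X ^ 2) * hs2

section Heisenberg

variable {n : ℕ}

theorem heisDeg_false (I J : Finset (Fin n)) : heisDeg ((false, I, J) : HeisIdx n) = #I + #J := by
  simp [heisDeg]

theorem heisDeg_true (I J : Finset (Fin n)) :
    heisDeg ((true, I, J) : HeisIdx n) = #I + #J + 1 := by
  simp [heisDeg]; ring

theorem heisDeg_lt (p : HeisIdx n) : heisDeg p < 2 * n + 2 := by
  have hI := card_le_univ p.2.1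
  have hJ := card_le_univ p.2.2
  simp only [Fintype.card_fin] at hI hJ
  unfold heisDeg
  split_ifs <;> omega

theorem heisChains_eq_piSupported (j : ℕ) :
    heisChains k n j = piSupported k {p | heisDeg p = j} := by
  ext f
  simp [heisChains, mem_piSupported]

theorem heisChains_eq_bot {j : ℕ} (hj : 2 * n + 2 ≤ j) : heisChains k n j = ⊥ := by
  rw [eq_bot_iff]
  intro f hf
  exact funext fun p => hf p (by have := heisDeg_lt p; omega)

theorem heisD_single (q : HeisIdx n) : heisD k n (Pi.single q 1) = heisDAux k n q := by
  simp [heisD]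

theorem heisD_single_true (a : Finset (Fin n) × Finset (Fin n)) :
    heisD k n (Pi.single (true, a) 1) = 0 := by
  simp [heisD_single, heisDAux]

theorem heisD_single_false [CharP k 2] (I J : Finset (Fin n)) :
    heisD k n (Pi.single (false, I, J) 1) =
      ∑ t ∈ I ∩ J, Pi.single (true, I.erase t, J.erase t) 1 := by
  simp [heisD_single, heisDAux, CharTwo.neg_eq]

theorem heisD_comp_heisD : heisD k n ∘ₗ heisD k n = 0 := by
  refine (Pi.basisFun k _).ext fun ⟨b, a⟩ => ?_
  cases b <;> simp [heisD_single, heisDAux]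

def heisZSwap : HeisCE k n ≃ₗ[k] HeisCE k n :=
  LinearEquiv.funCongrLeft k k (Equiv.prodCongr Equiv.boolNot (Equiv.refl _))

theorem heisZSwap_single (b : Bool) (a : Finset (Fin n) × Finset (Fin n)) :
    heisZSwap k (Pi.single (b, a) 1) = Pi.single (!b, a) 1 := by
  ext ⟨c, a'⟩
  cases b <;> cases c <;> simp [heisZSwap, LinearEquiv.funCongrLeft_apply, Pi.single_apply]

/-- `d` with the factor `z` stripped off its values, by swapping the exponent of `z`; being `d`
followed by an automorphism, it has the same ranks as `d`. -/
noncomputable def heisT : HeisCE k n →ₗ[k] HeisCE k n :=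
  (heisZSwap k).toLinearMap ∘ₗ heisD k n

theorem finrank_map_heisT (W : Submodule k (HeisCE k n)) :
    finrank k (W.map (heisT k)) = finrank k (W.map (heisD k n)) := by
  rw [heisT, Submodule.map_comp, LinearEquiv.finrank_map_eq]

theorem heisT_single_true (a : Finset (Fin n) × Finset (Fin n)) :
    heisT k (Pi.single (true, a) 1) = 0 := by
  simp [heisT, heisD_single_true]

theorem heisT_single_false [CharP k 2] (I J : Finset (Fin n)) :
    heisT k (Pi.single (false, I, J) 1) =
      ∑ t ∈ I ∩ J, Pi.single (false, I.erase t, J.erase t) 1 := by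
  simp [heisT, heisD_single_false, heisZSwap_single]

theorem heisT_comp_heisT [CharP k 2] : heisT k ∘ₗ heisT k = (0 : HeisCE k n →ₗ[k] _) := by
  refine (Pi.basisFun k _).ext fun ⟨b, I, J⟩ => ?_
  cases b
  · have hIJ (t : Fin n) : I.erase t ∩ J.erase t = (I ∩ J).erase t := by ext; simp; tauto
    simp only [Pi.basisFun_apply, LinearMap.comp_apply, heisT_single_false, map_sum, hIJ,
      LinearMap.zero_apply]
    exact sum_sum_erase_eq_zero_of_symm CharTwo.add_self_eq_zero _
      fun t s => by rw [erase_right_comm, erase_right_comm (s := J)]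
  · simp [heisT_single_true]

def agreeSet (I J : Finset (Fin n)) : Finset (Fin n) := (symmDiff I J)ᶜ

theorem mem_agreeSet {I J : Finset (Fin n)} {t : Fin n} : t ∈ agreeSet I J ↔ (t ∈ I ↔ t ∈ J) := by
  simp only [agreeSet, mem_compl, mem_symmDiff]
  tauto

theorem agreeSet_erase {I J : Finset (Fin n)} {t : Fin n} (hI : t ∈ I) (hJ : t ∈ J) :
    agreeSet (I.erase t) (J.erase t) = agreeSet I J := by
  ext s
  simp only [mem_agreeSet, mem_erase]
  by_cases h : s = t <;> simp [h, hI, hJ]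

theorem agreeSet_eq_empty_iff {I J : Finset (Fin n)} : agreeSet I J = ∅ ↔ J = Iᶜ := by
  simp only [mem_agreeSet, Finset.ext_iff, mem_compl]
  exact forall_congr' fun t => by tauto

/-- The Koszul homotopy of `heisT`, pivoting on the least `t` with `t ∈ I ↔ t ∈ J`. -/
noncomputable def heisHomotopyAux : HeisIdx n → HeisCE k n
  | (true, _) => 0
  | (false, I, J) =>
    if h : (agreeSet I J).Nonempty then
      if (agreeSet I J).min' h ∈ I then 0
      else Pi.single (false, insert ((agreeSet I J).min' h) I, insert ((agreeSet I J).min' h) J) 1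
    else 0

noncomputable def heisHomotopy : HeisCE k n →ₗ[k] HeisCE k n :=
  (Pi.basisFun k (HeisIdx n)).constr k (heisHomotopyAux k)

theorem heisHomotopy_single (q : HeisIdx n) :
    heisHomotopy k (Pi.single q 1) = heisHomotopyAux k q := by
  rw [← Pi.basisFun_apply, heisHomotopy, Basis.constr_basis]

theorem heisHomotopy_single_true (a : Finset (Fin n) × Finset (Fin n)) :
    heisHomotopy k (Pi.single (true, a) 1) = 0 := by
  rw [heisHomotopy_single, heisHomotopyAux]

theorem heisHomotopy_single_of_isLeast {I J : Finset (Fin n)} {t : Fin n}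
    (ht : IsLeast (agreeSet I J : Set (Fin n)) t) :
    heisHomotopy k (Pi.single (false, I, J) 1) =
      if t ∈ I then 0 else Pi.single (false, insert t I, insert t J) 1 := by
  have hne : (agreeSet I J).Nonempty := ⟨t, ht.1⟩
  rw [heisHomotopy_single, heisHomotopyAux, dif_pos hne, (isLeast_min' _ hne).unique ht]

theorem heisHomotopy_single_compl (I : Finset (Fin n)) :
    heisHomotopy k (Pi.single (false, I, Iᶜ) 1) = 0 := by
  rw [heisHomotopy_single, heisHomotopyAux, dif_neg]
  rw [not_nonempty_iff_eq_empty, agreeSet_eq_empty_iff]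

/-- The monomials `z x_I y_J` and `x_I y_{Iᶜ}`, a basis of the homology of `heisT`. -/
def heisHarmonic (n : ℕ) : Finset (HeisIdx n) := {p | p.1 = true ∨ p.2.2 = p.2.1ᶜ}

theorem heisHomotopy_heisT_single [CharP k 2] {I J : Finset (Fin n)} {t₀ : Fin n}
    (ht₀ : IsLeast (agreeSet I J : Set (Fin n)) t₀) :
    heisHomotopy k (heisT k (Pi.single (false, I, J) 1)) =
      ∑ t ∈ I ∩ J, if t₀ ∈ I.erase t then 0
        else Pi.single (false, insert t₀ (I.erase t), insert t₀ (J.erase t)) 1 := by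
  rw [heisT_single_false, map_sum]
  refine sum_congr rfl fun t ht => ?_
  rw [mem_inter] at ht
  rw [heisHomotopy_single_of_isLeast k (by rwa [agreeSet_erase ht.1 ht.2])]

theorem heisT_heisHomotopy_add_heisHomotopy_heisT [CharP k 2] :
    heisT k ∘ₗ heisHomotopy k + heisHomotopy k ∘ₗ heisT k =
      LinearMap.id - piProj k (heisHarmonic n) := by
  refine (Pi.basisFun k _).ext fun ⟨b, I, J⟩ => ?_
  simp only [Pi.basisFun_apply, LinearMap.add_apply, LinearMap.comp_apply, LinearMap.sub_apply,
    LinearMap.id_apply, piProj_single, heisHarmonic, mem_filter, mem_univ, true_and]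
  cases b
  swap
  · simp [heisHomotopy_single_true, heisT_single_true]
  by_cases hc : J = Iᶜ
  · subst hc
    simp [heisHomotopy_single_compl, heisT_single_false]
  obtain ⟨t₀, ht₀⟩ : ∃ t₀, IsLeast (agreeSet I J : Set (Fin n)) t₀ :=
    ⟨_, isLeast_min' _ (nonempty_iff_ne_empty.2 (agreeSet_eq_empty_iff.not.2 hc))⟩
  have hIJ : t₀ ∈ I ↔ t₀ ∈ J := mem_agreeSet.1 ht₀.1
  simp only [heisHomotopy_heisT_single k ht₀, heisHomotopy_single_of_isLeast k ht₀, hc,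
    Bool.false_eq_true, or_self, if_false, sub_zero]
  by_cases h₀ : t₀ ∈ I
  · rw [if_pos h₀, map_zero, zero_add, sum_eq_single t₀]
    · rw [if_neg (notMem_erase _ _), insert_erase h₀, insert_erase (hIJ.1 h₀)]
    · intro t _ ht
      rw [if_pos (mem_erase.2 ⟨Ne.symm ht, h₀⟩)]
    · intro h
      exact absurd (mem_inter.2 ⟨h₀, hIJ.1 h₀⟩) h
  · have hJ₀ : t₀ ∉ J := fun h => h₀ (hIJ.2 h)
    rw [if_neg h₀, heisT_single_false, ← insert_inter_distrib,
      sum_insert (fun h => h₀ (mem_inter.1 h).1), erase_insert h₀, erase_insert hJ₀, add_assoc,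
      ← sum_add_distrib, sum_eq_zero, add_zero]
    intro t ht
    have ht₀ : t₀ ≠ t := fun h => h₀ (h ▸ (mem_inter.1 ht).1)
    rw [if_neg fun h => h₀ (mem_of_mem_erase h), erase_insert_of_ne ht₀, erase_insert_of_ne ht₀]
    exact CharTwo.add_self_eq_zero _

theorem piProj_comp_heisT [CharP k 2] :
    piProj k (heisHarmonic n) ∘ₗ heisT k = 0 := by
  refine (Pi.basisFun k _).ext fun ⟨b, I, J⟩ => ?_
  cases b
  · simp only [Pi.basisFun_apply, LinearMap.comp_apply, heisT_single_false, map_sum,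
      piProj_single, LinearMap.zero_apply]
    refine sum_eq_zero fun t ht => if_neg ?_
    simp only [heisHarmonic, mem_filter, mem_univ, true_and, Bool.false_eq_true, false_or]
    intro h
    have : t ∈ (I.erase t)ᶜ := by simp
    rw [← h] at this
    simp at this
  · simp [heisT_single_true]

theorem map_heisT_heisChains_le [CharP k 2] (j : ℕ) :
    (heisChains k n (j + 2)).map (heisT k) ≤ heisChains k n j := by
  rw [heisChains_eq_piSupported, heisChains_eq_piSupported]
  refine map_piSupported_le fun ⟨b, I, J⟩ hp => ?_
  cases b
  · rw [heisT_single_false]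
    refine sum_mem fun t ht => single_mem_piSupported ?_
    rw [mem_inter] at ht
    simp only [mem_filter, mem_univ, true_and, heisDeg_false] at hp ⊢
    rw [card_erase_of_mem ht.1, card_erase_of_mem ht.2]
    have := card_pos.2 ⟨t, ht.1⟩
    have := card_pos.2 ⟨t, ht.2⟩
    omega
  · rw [heisT_single_true]
    exact zero_mem _

theorem map_heisHomotopy_heisChains_le (j : ℕ) :
    (heisChains k n j).map (heisHomotopy k) ≤ heisChains k n (j + 2) := by
  rw [heisChains_eq_piSupported, heisChains_eq_piSupported]
  refine map_piSupported_le fun ⟨b, I, J⟩ hp => ?_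
  cases b
  · by_cases hne : (agreeSet I J).Nonempty
    · have ht := isLeast_min' _ hne
      rw [heisHomotopy_single_of_isLeast k ht]
      split_ifs with hI
      · exact zero_mem _
      · have hJ : (agreeSet I J).min' hne ∉ J := fun h => hI (mem_agreeSet.1 ht.1 |>.2 h)
        refine single_mem_piSupported ?_
        simp only [mem_filter, mem_univ, true_and, heisDeg_false] at hp ⊢
        rw [card_insert_of_notMem hI, card_insert_of_notMem hJ]
        omega
    · rw [heisHomotopy_single, heisHomotopyAux, dif_neg hne]
      exact zero_mem _
  · rw [heisHomotopy_single_true]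
    exact zero_mem _

theorem map_piProj_heisChains_le (s : Finset (HeisIdx n)) (j : ℕ) :
    (heisChains k n j).map (piProj k s) ≤ heisChains k n j := by
  rw [heisChains_eq_piSupported, map_piProj_piSupported]
  exact piSupported_mono inter_subset_left

theorem finrank_heisChains (j : ℕ) :
    finrank k (heisChains k n j) = #{p : HeisIdx n | heisDeg p = j} := by
  rw [heisChains_eq_piSupported, finrank_piSupported]

theorem finrank_map_piProj_heisChains (s : Finset (HeisIdx n)) (j : ℕ) :
    finrank k ((heisChains k n j).map (piProj k s)) = #{p ∈ s | heisDeg p = j} := by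
  rw [heisChains_eq_piSupported, map_piProj_piSupported, finrank_piSupported, filter_inter,
    univ_inter]

theorem finrank_map_heisD_add_finrank_map_heisD [CharP k 2] (j : ℕ) :
    finrank k ((heisChains k n j).map (heisD k n)) +
        finrank k ((heisChains k n (j + 2)).map (heisD k n)) +
        #{p ∈ heisHarmonic n | heisDeg p = j} =
      #{p : HeisIdx n | heisDeg p = j} := by
  have := finrank_map_add_finrank_map_add_finrank_map_of_homotopy (heisT_comp_heisT k (n := n))
    (piProj_comp_heisT k) (piProj_comp_piProj _) (heisT_heisHomotopy_add_heisHomotopy_heisT k)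
    (map_heisT_heisChains_le k j) (map_heisHomotopy_heisChains_le k j)
    (map_piProj_heisChains_le k _ j)
  rw [finrank_map_heisT, finrank_map_heisT, finrank_heisChains,
    finrank_map_piProj_heisChains] at this
  omega

theorem heisBetti_eq (j : ℕ) :
    heisBetti k n j = #{p : HeisIdx n | heisDeg p = j} -
      finrank k ((heisChains k n j).map (heisD k n)) -
      finrank k ((heisChains k n (j + 1)).map (heisD k n)) := by
  have := (heisD k n).finrank_ker_inf_add_finrank_map (heisChains k n j)
  rw [finrank_heisChains] at this
  rw [heisBetti, heisCycles, heisBoundaries]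
  omega

theorem heisBetti_eq_zero {i : ℕ} (hi : 2 * n + 2 ≤ i) : heisBetti k n i = 0 := by
  rw [heisBetti, heisCycles, heisBoundaries, heisChains_eq_bot k hi,
    heisChains_eq_bot k (by omega : 2 * n + 2 ≤ i + 1), inf_bot_eq, Submodule.map_bot, finrank_bot]
  simp

theorem map_heisD_heisChains_eq_bot {j : ℕ} (hj : j < 2) :
    (heisChains k n j).map (heisD k n) = ⊥ := by
  rw [eq_bot_iff, heisChains_eq_piSupported]
  refine map_piSupported_le fun ⟨b, I, J⟩ hp => ?_
  rw [mem_bot]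
  cases b
  · have hIJ : I ∩ J = ∅ := by
      by_contra h
      obtain ⟨t, ht⟩ := nonempty_iff_ne_empty.2 h
      have := card_pos.2 ⟨t, (mem_inter.1 ht).1⟩
      have := card_pos.2 ⟨t, (mem_inter.1 ht).2⟩
      simp only [mem_filter, mem_univ, true_and, heisDeg_false] at hp
      omega
    simp [heisD_single, heisDAux, hIJ]
  · exact heisD_single_true k _

end Heisenberg

section Counting

variable {R : Type*} [CommSemiring R] {n : ℕ}

theorem sum_pow_card_finset_fin (x : R) : ∑ I : Finset (Fin n), x ^ #I = (1 + x) ^ n := by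
  simpa [add_comm] using Fin.sum_pow_mul_eq_add_pow x (1 : R)

theorem sum_sum_pow_card_add_card (x : R) :
    ∑ I : Finset (Fin n), ∑ J : Finset (Fin n), x ^ (#I + #J) = (1 + x) ^ (2 * n) := by
  simp only [pow_add, ← mul_sum, ← sum_mul, sum_pow_card_finset_fin]
  ring

theorem sum_pow_heisDeg (x : R) : ∑ p : HeisIdx n, x ^ heisDeg p = (1 + x) ^ (2 * n + 1) := by
  simp only [Fintype.sum_prod_type, Fintype.sum_bool, heisDeg_true, heisDeg_false, pow_succ,
    ← sum_mul, sum_sum_pow_card_add_card]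
  ring

theorem sum_heisHarmonic_pow_heisDeg (x : R) :
    ∑ p ∈ heisHarmonic n, x ^ heisDeg p = x * (1 + x) ^ (2 * n) + (2 * x) ^ n := by
  simp only [heisHarmonic, sum_filter, Fintype.sum_prod_type, Fintype.sum_bool, heisDeg_true,
    heisDeg_false, true_or, if_true, Bool.false_eq_true, false_or, sum_ite_eq', mem_univ,
    card_add_card_compl, Fintype.card_fin, sum_const, card_univ, Fintype.card_finset, nsmul_eq_mul,
    pow_succ, ← sum_mul, sum_sum_pow_card_add_card]
  push_cast
  ring

end Counting

/-- For a field `k` of characteristic `2` and the Chevalley–Eilenberg differential `d`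
of the Heisenberg Lie algebra on `Λ^• V`, `V = k^{2n+1}`: one has `d ∘ d = 0`, and the
Betti numbers `b_i = dim ker(d : Λ^i V → Λ^{i-1} V) − dim im(d : Λ^{i+1} V → Λ^i V)`
satisfy `(1 + t^2) · Σ_{i ≥ 0} b_i t^i = (1+t^3)(1+t)^{2n} + (t+t^2)(2t)^n` in `ℤ[t]`.
(The `b_i` vanish in degrees above `2n+1`, so the sum is the stated finite one.) -/
theorem heisenberg_CE_dd_zero_and_betti (k : Type*) [Field k] [CharP k 2] (n : ℕ) :
    heisD k n ∘ₗ heisD k n = 0 ∧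
    (∀ i, 2 * n + 2 ≤ i → heisBetti k n i = 0) ∧
    (1 + X ^ 2 : ℤ[X]) *
        ∑ i ∈ Finset.range (2 * n + 2), Polynomial.C (heisBetti k n i) * X ^ i =
      (1 + X ^ 3) * (1 + X) ^ (2 * n) + (X + X ^ 2) * (2 * X) ^ n := by
  refine ⟨heisD_comp_heisD k, fun i hi => heisBetti_eq_zero k hi, ?_⟩
  have hrank_bot {j : ℕ} (hj : (heisChains k n j).map (heisD k n) = ⊥) :
      (finrank k ((heisChains k n j).map (heisD k n)) : ℤ) = 0 := by
    rw [hj, finrank_bot, Nat.cast_zero]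
  rw [one_add_X_sq_mul_sum_range_eq (heisBetti_eq k)
    (c := fun j => #{p : HeisIdx n | heisDeg p = j})
    (ρ := fun j => #{p ∈ heisHarmonic n | heisDeg p = j})
    (fun j => by rw [← finrank_map_heisD_add_finrank_map_heisD k j]; push_cast; ring)
    (hrank_bot (map_heisD_heisChains_eq_bot k (by norm_num)))
    (hrank_bot (map_heisD_heisChains_eq_bot k (by norm_num)))
    (hrank_bot (by rw [heisChains_eq_bot k le_rfl, Submodule.map_bot]))
    (hrank_bot (by rw [heisChains_eq_bot k (Nat.le_succ _), Submodule.map_bot]))]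
  simp only [map_natCast]
  rw [sum_range_card_filter_mul_pow _ _ _ fun p _ => heisDeg_lt p,
    sum_range_card_filter_mul_pow _ _ _ fun p _ => heisDeg_lt p, sum_pow_heisDeg,
    sum_heisHarmonic_pow_heisDeg]
  ring
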